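/- arXiv:2002.04565 — 3 statements merged into one kernel-verified Lean document; each statement's English description precedes it below -/
import Mathlib

section
/- Let N ≥ 2 and 1 ≤ k ≤ N−1. Define ũ : ℝ^N → ℝ by ũ(x) = tanh(x_N/√2) if x_N ≥ 0 and ũ(x) = 0 if x_N < 0. Then ũ is continuous, |ũ(x)| < 1 for all x, ũ is a viscosity solution of P⁻_k(D²u) + u − u³ = 0 in ℝ^N, and ũ(x', x_N) → 0 as x_N → −∞ while ũ(x', x_N) → 1 as x_N → +∞. -/
/-!
The profile `q(s) = tanh(s/√2)` solves `q'' = q³ - q`, with `q³ - q ≤ 0` on `[0, ∞)`, and `ũ`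
glues it to the constant solution `0` along the hyperplane `x_N = 0`. Away from that hyperplane,
restricting `ũ - φ` to lines through `x₀` gives `q''(x₀,N) v_N² ≤ ⟨D²φ(x₀) v, v⟩` for all `v` at a
maximum, and `⟨D²φ(x₀) e_j, e_j⟩ ≤ 0` for `j ≠ N`, `⟨D²φ(x₀) e_N, e_N⟩ ≤ q''(x₀,N)` at a minimum.
Bessel's inequality `∑ᵢ (vᵢ)_N² ≤ 1` for an orthonormal family then yields `P⁻ₖ(D²φ) ≥ q³ - q`, and
the family made of `e_N` and `k - 1` other coordinate vectors yields `P⁻ₖ(D²φ) ≤ q³ - q`. On the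
hyperplane the kink is convex (one-sided slopes `0 < 1/√2`), so no test function touches `ũ` from
above there, while from below the `k ≤ N - 1` coordinate directions tangent to the hyperplane give
`P⁻ₖ(D²φ) ≤ 0`.
-/

/-- The truncated Laplacian `P⁻ₖ(X)`: the sum of the `k` smallest eigenvalues of the
symmetric matrix `X`, expressed via the Ky Fan variational principle as the infimum of
`∑ᵢ ⟨X vᵢ, vᵢ⟩` over orthonormal families `v₁, …, v_k`. -/
noncomputable def truncLap {N : ℕ} (k : ℕ) (X : Matrix (Fin N) (Fin N) ℝ) : ℝ :=
  sInf { s : ℝ | ∃ v : Fin k → (Fin N → ℝ),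
    (∀ i j, dotProduct (v i) (v j) = if i = j then (1 : ℝ) else 0) ∧
    s = ∑ i, dotProduct (X.mulVec (v i)) (v i) }

/-- The Hessian matrix of `φ : ℝ^N → ℝ` at `x`. -/
noncomputable def hess {N : ℕ} (φ : EuclideanSpace ℝ (Fin N) → ℝ)
    (x : EuclideanSpace ℝ (Fin N)) : Matrix (Fin N) (Fin N) ℝ :=
  fun i j => iteratedFDeriv ℝ 2 φ x ![EuclideanSpace.single i 1, EuclideanSpace.single j 1]

/-- `u` is a viscosity subsolution of `P⁻ₖ(D²u) + f(u) = 0` in `ℝ^N`. -/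
def IsViscSubsol {N : ℕ} (k : ℕ) (f : ℝ → ℝ) (u : EuclideanSpace ℝ (Fin N) → ℝ) : Prop :=
  ∀ φ : EuclideanSpace ℝ (Fin N) → ℝ, ContDiff ℝ 2 φ →
    ∀ x₀, IsLocalMax (fun x => u x - φ x) x₀ →
      0 ≤ truncLap k (hess φ x₀) + f (u x₀)

/-- `u` is a viscosity supersolution of `P⁻ₖ(D²u) + f(u) = 0` in `ℝ^N`. -/
def IsViscSupersol {N : ℕ} (k : ℕ) (f : ℝ → ℝ) (u : EuclideanSpace ℝ (Fin N) → ℝ) : Prop :=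
  ∀ φ : EuclideanSpace ℝ (Fin N) → ℝ, ContDiff ℝ 2 φ →
    ∀ x₀, IsLocalMin (fun x => u x - φ x) x₀ →
      truncLap k (hess φ x₀) + f (u x₀) ≤ 0

open Filter Topology Set Matrix

theorem iteratedDeriv_two_eq_deriv_deriv (f : ℝ → ℝ) : iteratedDeriv 2 f = deriv (deriv f) := by
  rw [iteratedDeriv_succ, iteratedDeriv_one]

theorem IsLocalMax.iteratedDeriv_two_nonpos {f : ℝ → ℝ} {a : ℝ} (h : IsLocalMax f a)
    (hf : ContinuousAt f a) : iteratedDeriv 2 f a ≤ 0 := by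
  rw [iteratedDeriv_two_eq_deriv_deriv]
  by_contra! hpos
  -- the second-derivative test makes `a` a local minimum too, so `f` is locally constant
  have hmin := isLocalMin_of_deriv_deriv_pos hpos h.deriv_eq_zero hf
  have hconst : f =ᶠ[𝓝 a] fun _ => f a := (h.and hmin).mono fun x hx => le_antisymm hx.1 hx.2
  have hderiv : deriv f =ᶠ[𝓝 a] fun _ => 0 := by
    filter_upwards [hconst.eventuallyEq_nhds] with x hx
    rw [hx.deriv_eq, deriv_const]
  rw [hderiv.deriv_eq, deriv_const] at hpos
  exact hpos.false

theorem IsLocalMax.hasDerivWithinAt_Ici_le_Iic {f : ℝ → ℝ} {a α β : ℝ} (h : IsLocalMax f a)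
    (hl : HasDerivWithinAt f α (Iic a) a) (hr : HasDerivWithinAt f β (Ici a) a) : β ≤ α := by
  have hβ : β ≤ 0 := by
    simpa using (h.on (Ici a)).hasFDerivWithinAt_nonpos hr.hasFDerivWithinAt (y := 1)
      (mem_posTangentConeAt_of_segment_subset (by
        rw [segment_eq_Icc (by linarith)]; exact Icc_subset_Ici_self))
  have hα : -α ≤ 0 := by
    simpa using (h.on (Iic a)).hasFDerivWithinAt_nonpos hl.hasFDerivWithinAt
      (y := -1) (mem_posTangentConeAt_of_segment_subset (by
        rw [segment_symm, segment_eq_Icc (by linarith)]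
        simp [← sub_eq_add_neg, Icc_subset_Iic_self]))
  linarith

theorem iteratedDeriv_two_comp_affine {q : ℝ → ℝ} (hq : ContDiff ℝ 2 q) (a c : ℝ) :
    iteratedDeriv 2 (fun t => q (a + t * c)) 0 = iteratedDeriv 2 q a * c ^ 2 := by
  have hshift : ContDiff ℝ 2 fun z => q (a + z) := hq.comp (by fun_prop)
  simp_rw [mul_comm _ c]
  rw [iteratedDeriv_comp_const_mul (n := 2) hshift c, iteratedDeriv_comp_const_add]
  simp [mul_comm]

section Lines

variable {E : Type*} [NormedAddCommGroup E] [NormedSpace ℝ E]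

theorem iteratedDeriv_two_le_of_isLocalMax_sub {u φ : E → ℝ} {x₀ v : E} {m : ℝ → ℝ}
    (hmax : IsLocalMax (fun x => u x - φ x) x₀) (hφ : ContDiff ℝ 2 φ) (hm : ContDiff ℝ 2 m)
    (hum : ∀ᶠ t in 𝓝 0, u (x₀ + t • v) = m t) :
    iteratedDeriv 2 m 0 ≤ iteratedDeriv 2 (fun t : ℝ => φ (x₀ + t • v)) 0 := by
  have hg : ContDiff ℝ 2 fun t : ℝ => φ (x₀ + t • v) := hφ.comp (by fun_prop)
  have hline : IsLocalMax (fun t : ℝ => m t - φ (x₀ + t • v)) 0 := by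
    have hmax0 : IsLocalMax (fun x => u x - φ x) (x₀ + (0 : ℝ) • v) := by simpa using hmax
    refine (hmax0.comp_continuous (g := fun t : ℝ => x₀ + t • v) (by fun_prop)).congr ?_
    filter_upwards [hum] with t ht
    simp [ht]
  have := hline.iteratedDeriv_two_nonpos (hm.continuous.sub hg.continuous).continuousAt
  rw [iteratedDeriv_fun_sub hm.contDiffAt hg.contDiffAt] at this
  exact sub_nonpos.mp this

theorem iteratedDeriv_two_le_of_isLocalMin_sub {u φ : E → ℝ} {x₀ v : E} {m : ℝ → ℝ}
    (hmin : IsLocalMin (fun x => u x - φ x) x₀) (hφ : ContDiff ℝ 2 φ) (hm : ContDiff ℝ 2 m)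
    (hum : ∀ᶠ t in 𝓝 0, u (x₀ + t • v) = m t) :
    iteratedDeriv 2 (fun t : ℝ => φ (x₀ + t • v)) 0 ≤ iteratedDeriv 2 m 0 := by
  have hmax : IsLocalMax (fun x => -u x - -φ x) x₀ := by
    simpa only [neg_sub, neg_sub_neg] using hmin.neg
  have := iteratedDeriv_two_le_of_isLocalMax_sub (v := v) hmax hφ.neg hm.neg
    (hum.mono fun t ht => by simp only [ht])
  simpa [iteratedDeriv_neg] using this

end Lines

theorem iteratedDeriv_two_comp_line_eq_hess {N : ℕ} {φ : EuclideanSpace ℝ (Fin N) → ℝ}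
    (hφ : ContDiff ℝ 2 φ) (x₀ : EuclideanSpace ℝ (Fin N)) (v : Fin N → ℝ) :
    iteratedDeriv 2 (fun t : ℝ => φ (x₀ + t • WithLp.toLp 2 v)) 0 = hess φ x₀ *ᵥ v ⬝ᵥ v := by
  set V : EuclideanSpace ℝ (Fin N) := WithLp.toLp 2 v
  have hshift : ContDiff ℝ 2 fun y => φ (x₀ + y) := hφ.comp (by fun_prop)
  have hcomp : (fun t : ℝ => φ (x₀ + t • V)) =
      (fun y => φ (x₀ + y)) ∘ ContinuousLinearMap.toSpanSingleton ℝ V := rfl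
  have hV : V = ∑ i, v i • EuclideanSpace.single i (1 : ℝ) := by
    ext j
    simp [V, Pi.single_apply]
  rw [iteratedDeriv_eq_iteratedFDeriv, hcomp,
    ContinuousLinearMap.iteratedFDeriv_comp_right _ hshift _ le_rfl]
  simp only [ContinuousMultilinearMap.compContinuousLinearMap_apply,
    ContinuousLinearMap.toSpanSingleton_apply, one_smul, iteratedFDeriv_comp_add_left, map_zero,
    add_zero, iteratedFDeriv_two_apply]
  rw [hV]
  simp only [map_sum, map_smul, _root_.sum_apply, _root_.smul_apply, smul_eq_mul, hess,
    iteratedFDeriv_two_apply, dotProduct, mulVec, Finset.sum_mul, Finset.mul_sum,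
    Matrix.cons_val_zero, Matrix.cons_val_one]
  rw [Finset.sum_comm]
  exact Finset.sum_congr rfl fun _ _ => Finset.sum_congr rfl fun _ _ => by ring

section TruncLap

open Finset

variable {N k : ℕ}

theorem orthonormal_toLp_of_dotProduct {v : Fin k → Fin N → ℝ}
    (hv : ∀ i j, v i ⬝ᵥ v j = if i = j then 1 else 0) :
    Orthonormal ℝ fun i => WithLp.toLp 2 (v i) :=
  orthonormal_iff_ite.2 fun i j => by
    simp [EuclideanSpace.inner_eq_star_dotProduct, dotProduct_comm, hv]

theorem sum_sq_apply_le_one_of_dotProduct {v : Fin k → Fin N → ℝ}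
    (hv : ∀ i j, v i ⬝ᵥ v j = if i = j then 1 else 0) (l : Fin N) :
    ∑ i, v i l ^ 2 ≤ 1 := by
  simpa [EuclideanSpace.inner_eq_star_dotProduct] using
    (orthonormal_toLp_of_dotProduct hv).sum_inner_products_le (EuclideanSpace.single l 1)
      (s := univ)

theorem abs_apply_le_one_of_dotProduct {v : Fin k → Fin N → ℝ}
    (hv : ∀ i j, v i ⬝ᵥ v j = if i = j then 1 else 0) (i : Fin k) (l : Fin N) :
    |v i l| ≤ 1 :=
  (sq_le_one_iff_abs_le_one _).1 <| (single_le_sum (f := fun i => v i l ^ 2)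
    (fun _ _ => sq_nonneg _) (mem_univ i)).trans (sum_sq_apply_le_one_of_dotProduct hv l)

theorem abs_mulVec_dotProduct_le (X : Matrix (Fin N) (Fin N) ℝ) {x : Fin N → ℝ}
    (hx : ∀ j, |x j| ≤ 1) : |X *ᵥ x ⬝ᵥ x| ≤ ∑ i, ∑ j, |X i j| := by
  calc |X *ᵥ x ⬝ᵥ x| = |∑ i, ∑ j, X i j * x j * x i| := by
        simp only [dotProduct, mulVec, Finset.sum_mul]
    _ ≤ ∑ i, ∑ j, |X i j * x j * x i| :=
        (abs_sum_le_sum_abs _ _).trans (sum_le_sum fun i _ => abs_sum_le_sum_abs _ _)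
    _ ≤ ∑ i, ∑ j, |X i j| := sum_le_sum fun i _ => sum_le_sum fun j _ => by
        rw [abs_mul, abs_mul]
        exact mul_le_of_le_one_right (by positivity) (hx i) |>.trans
          (mul_le_of_le_one_right (abs_nonneg _) (hx j))

theorem truncLap_le_sum (X : Matrix (Fin N) (Fin N) ℝ) {v : Fin k → Fin N → ℝ}
    (hv : ∀ i j, v i ⬝ᵥ v j = if i = j then 1 else 0) :
    truncLap k X ≤ ∑ i, X *ᵥ v i ⬝ᵥ v i := by
  refine csInf_le ⟨-(k * ∑ i, ∑ j, |X i j|), ?_⟩ ⟨v, hv, rfl⟩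
  rintro _ ⟨w, hw, rfl⟩
  have hterm : ∀ m, -∑ i, ∑ j, |X i j| ≤ X *ᵥ w m ⬝ᵥ w m := fun m =>
    neg_le_of_abs_le (abs_mulVec_dotProduct_le X (abs_apply_le_one_of_dotProduct hw m))
  simpa using sum_le_sum fun m (_ : m ∈ Finset.univ) => hterm m

theorem dotProduct_single_single {σ : Fin k → Fin N} (hσ : Function.Injective σ) (i j : Fin k) :
    (Pi.single (σ i) 1 : Fin N → ℝ) ⬝ᵥ Pi.single (σ j) 1 = if i = j then 1 else 0 := by
  simp [Pi.single_apply, hσ.eq_iff, eq_comm]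

theorem mulVec_single_one_dotProduct_single (X : Matrix (Fin N) (Fin N) ℝ) (j : Fin N) :
    X *ᵥ Pi.single j 1 ⬝ᵥ Pi.single j 1 = X j j := by
  simp

theorem truncLap_le_sum_diag (X : Matrix (Fin N) (Fin N) ℝ) {σ : Fin k → Fin N}
    (hσ : Function.Injective σ) : truncLap k X ≤ ∑ i, X (σ i) (σ i) := by
  simpa [mulVec_single_one_dotProduct_single] using
    truncLap_le_sum X (dotProduct_single_single hσ)

theorem le_truncLap_of_mul_sq_le (X : Matrix (Fin N) (Fin N) ℝ) (hk : k ≤ N) {c : ℝ} (hc : c ≤ 0) (l : Fin N)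
    (h : ∀ x, c * x l ^ 2 ≤ X *ᵥ x ⬝ᵥ x) : c ≤ truncLap k X := by
  refine le_csInf ⟨_, _, dotProduct_single_single (Fin.castLE_injective hk), rfl⟩ ?_
  rintro _ ⟨v, hv, rfl⟩
  calc c ≤ c * ∑ i, v i l ^ 2 := by nlinarith [sum_sq_apply_le_one_of_dotProduct hv l]
    _ ≤ ∑ i, X *ᵥ v i ⬝ᵥ v i := by
        rw [mul_sum]
        exact sum_le_sum fun i _ => h (v i)

theorem truncLap_le_zero_of_diag_nonpos {n : ℕ} (hk : k ≤ n)
    (X : Matrix (Fin (n + 1)) (Fin (n + 1)) ℝ) (h : ∀ j ≠ Fin.last n, X j j ≤ 0) :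
    truncLap k X ≤ 0 :=
  (truncLap_le_sum_diag X (σ := fun i => (Fin.castLE hk i).castSucc)
    (Fin.castSucc_injective _ |>.comp (Fin.castLE_injective hk))).trans
    (sum_nonpos fun _ _ => h _ (Fin.castSucc_ne_last _))

theorem truncLap_le_diag_last {n : ℕ} (hk1 : 1 ≤ k) (hk : k ≤ n + 1)
    (X : Matrix (Fin (n + 1)) (Fin (n + 1)) ℝ) (h : ∀ j ≠ Fin.last n, X j j ≤ 0) :
    truncLap k X ≤ X (Fin.last n) (Fin.last n) := by
  obtain ⟨k, rfl⟩ := Nat.exists_eq_add_of_le' hk1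
  set σ : Fin (k + 1) → Fin (n + 1) := fun i => Fin.rev (Fin.castLE hk i)
  have hσ : Function.Injective σ := Fin.rev_injective.comp (Fin.castLE_injective hk)
  have hσ0 : σ 0 = Fin.last n := by simp [σ]
  refine (truncLap_le_sum_diag X hσ).trans ?_
  rw [Fin.sum_univ_succ, hσ0]
  exact add_le_of_nonpos_right (sum_nonpos fun i _ => h _ (by simp [σ, Fin.ext_iff]; omega))

end TruncLap

namespace Real

theorem hasDerivAt_tanh (x : ℝ) : HasDerivAt tanh (1 - tanh x ^ 2) x := by
  have h := (hasDerivAt_sinh x).div (hasDerivAt_cosh x) (cosh_pos x).ne'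
  rw [show sinh / cosh = tanh from funext fun y => (tanh_eq_sinh_div_cosh y).symm] at h
  refine h.congr_deriv ?_
  rw [tanh_eq_sinh_div_cosh]
  field_simp

theorem contDiff_tanh {n : WithTop ℕ∞} : ContDiff ℝ n tanh := by
  rw [show tanh = fun y => sinh y / cosh y from funext tanh_eq_sinh_div_cosh]
  exact contDiff_sinh.div contDiff_cosh fun x => (cosh_pos x).ne'

theorem tanh_nonneg {x : ℝ} (hx : 0 ≤ x) : 0 ≤ tanh x := by
  rw [tanh_eq_sinh_div_cosh]
  exact div_nonneg (sinh_nonneg_iff.2 hx) (cosh_pos x).le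

theorem tendsto_tanh_atTop : Tendsto tanh atTop (𝓝 1) := by
  have h : ∀ x, tanh x = 1 - 2 / (exp (2 * x) + 1) := fun x => by
    rw [tanh_eq, show 2 * x = x + x by ring, exp_add]
    have := exp_pos x
    field_simp
    rw [exp_neg]
    field_simp
    ring
  have hexp : Tendsto (fun x => exp (2 * x) + 1) atTop atTop :=
    tendsto_atTop_add_const_right _ 1 <| tendsto_exp_atTop.comp <|
      tendsto_id.const_mul_atTop two_pos
  simpa [← h] using (tendsto_const_nhds (x := (1 : ℝ))).sub
    (tendsto_const_nhds (x := (2 : ℝ)).div_atTop hexp)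

end Real

noncomputable def tanhProfile (s : ℝ) : ℝ := Real.tanh (s / √2)

theorem contDiff_tanhProfile {n : WithTop ℕ∞} : ContDiff ℝ n tanhProfile :=
  Real.contDiff_tanh.comp (contDiff_id.div_const _)

theorem hasDerivAt_tanhProfile (s : ℝ) :
    HasDerivAt tanhProfile ((1 - tanhProfile s ^ 2) / √2) s := by
  refine ((Real.hasDerivAt_tanh (s / √2)).comp s ((hasDerivAt_id s).div_const √2)).congr_deriv ?_
  simp [tanhProfile, div_eq_mul_inv]

theorem iteratedDeriv_two_tanhProfile (s : ℝ) :
    iteratedDeriv 2 tanhProfile s = tanhProfile s ^ 3 - tanhProfile s := by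
  have hderiv : deriv tanhProfile = fun s => (1 - tanhProfile s ^ 2) / √2 :=
    funext fun s => (hasDerivAt_tanhProfile s).deriv
  rw [iteratedDeriv_two_eq_deriv_deriv, hderiv]
  have h2 : √2 ^ 2 = 2 := Real.sq_sqrt zero_le_two
  refine ((((hasDerivAt_tanhProfile s).pow 2).const_sub 1).div_const √2).deriv.trans ?_
  field_simp
  linear_combination (tanhProfile s - tanhProfile s ^ 3) * h2

theorem tanhProfile_zero : tanhProfile 0 = 0 := by simp [tanhProfile]

theorem abs_tanhProfile_lt_one (s : ℝ) : |tanhProfile s| < 1 := Real.abs_tanh_lt_one _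

theorem tanhProfile_nonneg {s : ℝ} (hs : 0 ≤ s) : 0 ≤ tanhProfile s :=
  Real.tanh_nonneg (by positivity)

theorem tanhProfile_cube_sub_self_nonpos {s : ℝ} (hs : 0 ≤ s) :
    tanhProfile s ^ 3 - tanhProfile s ≤ 0 := by
  have h0 := tanhProfile_nonneg hs
  have h1 := (abs_lt.1 (abs_tanhProfile_lt_one s)).2
  nlinarith [mul_nonneg h0 (sub_nonneg.2 h1.le)]

noncomputable def kinkProfile (t : ℝ) : ℝ := if 0 ≤ t then tanhProfile t else 0

theorem kinkProfile_of_nonneg {t : ℝ} (ht : 0 ≤ t) : kinkProfile t = tanhProfile t := if_pos ht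

theorem kinkProfile_of_nonpos {t : ℝ} (ht : t ≤ 0) : kinkProfile t = 0 := by
  rcases ht.lt_or_eq with ht | rfl
  · exact if_neg (not_le.2 ht)
  · exact (kinkProfile_of_nonneg le_rfl).trans tanhProfile_zero

theorem continuous_kinkProfile : Continuous kinkProfile :=
  Continuous.if_le (contDiff_tanhProfile (n := 0)).continuous continuous_const continuous_const
    continuous_id fun t ht => by simp [← ht, tanhProfile_zero]

theorem abs_kinkProfile_lt_one (t : ℝ) : |kinkProfile t| < 1 := by
  rcases le_total 0 t with ht | ht
  · rw [kinkProfile_of_nonneg ht]; exact abs_tanhProfile_lt_one t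
  · simp [kinkProfile_of_nonpos ht]

theorem kinkProfile_eventuallyEq_of_pos {a : ℝ} (ha : 0 < a) : kinkProfile =ᶠ[𝓝 a] tanhProfile :=
  (eventually_gt_nhds ha).mono fun _ ht => kinkProfile_of_nonneg ht.le

theorem kinkProfile_eventuallyEq_of_neg {a : ℝ} (ha : a < 0) : kinkProfile =ᶠ[𝓝 a] 0 :=
  (eventually_lt_nhds ha).mono fun _ ht => kinkProfile_of_nonpos ht.le

theorem hasDerivWithinAt_kinkProfile_Iic : HasDerivWithinAt kinkProfile 0 (Iic 0) 0 :=
  (hasDerivWithinAt_const 0 _ 0).congr (fun _ ht => kinkProfile_of_nonpos ht)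
    (kinkProfile_of_nonpos le_rfl)

theorem hasDerivWithinAt_kinkProfile_Ici : HasDerivWithinAt kinkProfile (1 / √2) (Ici 0) 0 := by
  have h := (hasDerivAt_tanhProfile 0).hasDerivWithinAt (s := Ici 0)
  rw [tanhProfile_zero] at h
  simpa using h.congr (fun _ ht => kinkProfile_of_nonneg ht) (kinkProfile_of_nonneg le_rfl)

theorem tendsto_kinkProfile_atBot : Tendsto kinkProfile atBot (𝓝 0) :=
  tendsto_const_nhds.congr'
    ((eventually_le_atBot 0).mono fun _ ht => (kinkProfile_of_nonpos ht).symm)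

theorem tendsto_kinkProfile_atTop : Tendsto kinkProfile atTop (𝓝 1) :=
  (Real.tendsto_tanh_atTop.comp (tendsto_id.atTop_div_const (by positivity))).congr'
    ((eventually_ge_atTop 0).mono fun _ ht => (kinkProfile_of_nonneg ht).symm)

section Coordinate

variable {N : ℕ} {w q : ℝ → ℝ} {φ : EuclideanSpace ℝ (Fin N) → ℝ}
  {x₀ : EuclideanSpace ℝ (Fin N)} {l : Fin N}

theorem eventually_comp_line_eq (h : w =ᶠ[𝓝 (x₀ l)] q) (v : Fin N → ℝ) :
    ∀ᶠ t in 𝓝 (0 : ℝ), w ((x₀ + t • WithLp.toLp 2 v) l) = q (x₀ l + t * v l) := by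
  have hline : Tendsto (fun t : ℝ => x₀ l + t * v l) (𝓝 0) (𝓝 (x₀ l)) := by
    have hc : Continuous fun t : ℝ => x₀ l + t * v l := by fun_prop
    simpa using hc.tendsto 0
  filter_upwards [hline.eventually h] with t ht
  simpa using ht

theorem le_truncLap_of_isLocalMax {k : ℕ} (hk : k ≤ N)
    (hmax : IsLocalMax (fun x => w (x l) - φ x) x₀) (hφ : ContDiff ℝ 2 φ)
    (hq : ContDiff ℝ 2 q) (hwq : w =ᶠ[𝓝 (x₀ l)] q) (hq2 : iteratedDeriv 2 q (x₀ l) ≤ 0) :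
    iteratedDeriv 2 q (x₀ l) ≤ truncLap k (hess φ x₀) := by
  refine le_truncLap_of_mul_sq_le _ hk hq2 l fun v => ?_
  have := iteratedDeriv_two_le_of_isLocalMax_sub (m := fun t => q (x₀ l + t * v l)) hmax hφ
    (hq.comp (contDiff_const.add (contDiff_id.mul contDiff_const)))
    (eventually_comp_line_eq hwq v)
  rwa [iteratedDeriv_two_comp_affine hq, iteratedDeriv_two_comp_line_eq_hess hφ] at this

theorem hess_apply_self_nonpos_of_isLocalMin (hmin : IsLocalMin (fun x => w (x l) - φ x) x₀)
    (hφ : ContDiff ℝ 2 φ) {j : Fin N} (hj : j ≠ l) : hess φ x₀ j j ≤ 0 := by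
  have := iteratedDeriv_two_le_of_isLocalMin_sub hmin hφ (contDiff_const (c := w (x₀ l)))
    (v := WithLp.toLp 2 (Pi.single j 1)) (Eventually.of_forall fun t => by simp [hj.symm])
  rwa [iteratedDeriv_two_comp_line_eq_hess hφ, mulVec_single_one_dotProduct_single,
    iteratedDeriv_const] at this

theorem hess_apply_self_le_of_isLocalMin (hmin : IsLocalMin (fun x => w (x l) - φ x) x₀)
    (hφ : ContDiff ℝ 2 φ) (hq : ContDiff ℝ 2 q) (hwq : w =ᶠ[𝓝 (x₀ l)] q) :
    hess φ x₀ l l ≤ iteratedDeriv 2 q (x₀ l) := by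
  have := iteratedDeriv_two_le_of_isLocalMin_sub
    (m := fun t => q (x₀ l + t * (Pi.single l 1 : Fin N → ℝ) l)) hmin hφ
    (hq.comp (contDiff_const.add (contDiff_id.mul contDiff_const)))
    (eventually_comp_line_eq hwq (Pi.single l 1 : Fin N → ℝ))
  rwa [iteratedDeriv_two_comp_affine hq, iteratedDeriv_two_comp_line_eq_hess hφ,
    mulVec_single_one_dotProduct_single, Pi.single_eq_same, one_pow, mul_one] at this

theorem hasDerivWithinAt_Ici_le_Iic_of_isLocalMax_sub {α β : ℝ}
    (hmax : IsLocalMax (fun x => w (x l) - φ x) x₀) (hφ : Differentiable ℝ φ)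
    (hl : HasDerivWithinAt w α (Iic (x₀ l)) (x₀ l))
    (hr : HasDerivWithinAt w β (Ici (x₀ l)) (x₀ l)) : β ≤ α := by
  set a := x₀ l
  set e : EuclideanSpace ℝ (Fin N) := EuclideanSpace.single l 1
  have hline : HasDerivAt (fun t : ℝ => x₀ + (t - a) • e) e a := by
    simpa using (((hasDerivAt_id a).sub_const a).smul_const e).const_add x₀
  have hφline : HasDerivAt (fun t : ℝ => φ (x₀ + (t - a) • e)) (fderiv ℝ φ x₀ e) a := by
    exact (hφ x₀).hasFDerivAt.comp_hasDerivAt_of_eq a hline (by simp)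
  have hmax' : IsLocalMax (fun t => w t - φ (x₀ + (t - a) • e)) a := by
    have hmax0 : IsLocalMax (fun x => w (x l) - φ x) (x₀ + (a - a) • e) := by simpa using hmax
    have hcoord : ∀ t, (x₀ + (t - a) • e) l = t := fun t => by simp [e, a]
    exact (hmax0.comp_continuous (g := fun t : ℝ => x₀ + (t - a) • e) hline.continuousAt).congr
      (Eventually.of_forall fun t => by simp only [Function.comp_apply, hcoord])
  have := hmax'.hasDerivWithinAt_Ici_le_Iic (hl.sub hφline.hasDerivWithinAt)
    (hr.sub hφline.hasDerivWithinAt)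
  linarith

end Coordinate

theorem truncLap_le_of_isLocalMin {n k : ℕ} (hk1 : 1 ≤ k) (hk : k ≤ n + 1) {w q : ℝ → ℝ}
    {φ : EuclideanSpace ℝ (Fin (n + 1)) → ℝ} {x₀ : EuclideanSpace ℝ (Fin (n + 1))}
    (hmin : IsLocalMin (fun x => w (x (Fin.last n)) - φ x) x₀) (hφ : ContDiff ℝ 2 φ)
    (hq : ContDiff ℝ 2 q) (hwq : w =ᶠ[𝓝 (x₀ (Fin.last n))] q) :
    truncLap k (hess φ x₀) ≤ iteratedDeriv 2 q (x₀ (Fin.last n)) :=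
  (truncLap_le_diag_last hk1 hk _ fun _ hj => hess_apply_self_nonpos_of_isLocalMin hmin hφ hj).trans
    (hess_apply_self_le_of_isLocalMin hmin hφ hq hwq)

theorem isViscSubsol_kinkProfile {n k : ℕ} (hk : k ≤ n + 1) :
    IsViscSubsol k (fun s => s - s ^ 3)
      fun x : EuclideanSpace ℝ (Fin (n + 1)) => kinkProfile (x (Fin.last n)) := by
  intro φ hφ x₀ hmax
  rcases lt_trichotomy (x₀ (Fin.last n)) 0 with hneg | hzero | hpos
  · have := le_truncLap_of_isLocalMax (q := 0) hk hmax hφ contDiff_zero_fun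
      (kinkProfile_eventuallyEq_of_neg hneg) (by simp)
    simp only [kinkProfile_of_nonpos hneg.le]
    simpa using this
  · have := hasDerivWithinAt_Ici_le_Iic_of_isLocalMax_sub hmax (hφ.differentiable two_ne_zero)
      (by rw [hzero]; exact hasDerivWithinAt_kinkProfile_Iic)
      (by rw [hzero]; exact hasDerivWithinAt_kinkProfile_Ici)
    exact absurd this (not_le.2 (by positivity))
  · have := le_truncLap_of_isLocalMax hk hmax hφ contDiff_tanhProfile
      (kinkProfile_eventuallyEq_of_pos hpos)
      ((iteratedDeriv_two_tanhProfile _).trans_le (tanhProfile_cube_sub_self_nonpos hpos.le))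
    rw [iteratedDeriv_two_tanhProfile] at this
    simp only [kinkProfile_of_nonneg hpos.le]
    linarith

theorem isViscSupersol_kinkProfile {n k : ℕ} (hk1 : 1 ≤ k) (hk : k ≤ n) :
    IsViscSupersol k (fun s => s - s ^ 3)
      fun x : EuclideanSpace ℝ (Fin (n + 1)) => kinkProfile (x (Fin.last n)) := by
  intro φ hφ x₀ hmin
  rcases le_or_gt (x₀ (Fin.last n)) 0 with hle | hpos
  · have := truncLap_le_zero_of_diag_nonpos hk _ fun _ hj =>
      hess_apply_self_nonpos_of_isLocalMin hmin hφ hj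
    simpa [kinkProfile_of_nonpos hle] using this
  · have := truncLap_le_of_isLocalMin hk1 (hk.trans n.le_succ) hmin hφ contDiff_tanhProfile
      (kinkProfile_eventuallyEq_of_pos hpos)
    rw [iteratedDeriv_two_tanhProfile] at this
    simp only [kinkProfile_of_nonneg hpos.le]
    linarith

/-- the one-dimensional function `ũ(x) = tanh(x_N/√2)` for `x_N ≥ 0`,
`ũ(x) = 0` for `x_N < 0`, is continuous, satisfies `|ũ| < 1`, is a viscosity solution of
`P⁻ₖ(D²u) + u - u³ = 0` in `ℝ^N`, and its profile tends to `0` at `-∞` and to `1` at `+∞`. -/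
theorem stmt2 {n : ℕ} (k : ℕ) (hk1 : 1 ≤ k) (hk2 : k ≤ n + 1)
    (w : ℝ → ℝ)
    (hw : ∀ t : ℝ, w t = if 0 ≤ t then Real.tanh (t / Real.sqrt 2) else 0)
    (u : EuclideanSpace ℝ (Fin (n + 2)) → ℝ)
    (hu : ∀ x, u x = w (x (Fin.last (n + 1)))) :
    Continuous u ∧ (∀ x, |u x| < 1) ∧
    IsViscSubsol k (fun s => s - s ^ 3) u ∧
    IsViscSupersol k (fun s => s - s ^ 3) u ∧
    Filter.Tendsto w Filter.atBot (nhds 0) ∧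
    Filter.Tendsto w Filter.atTop (nhds 1) := by
  obtain rfl : w = kinkProfile := funext hw
  obtain rfl : u = fun x => kinkProfile (x (Fin.last (n + 1))) := funext hu
  exact ⟨continuous_kinkProfile.comp (PiLp.continuous_apply _ _ _),
    fun _ => abs_kinkProfile_lt_one _, isViscSubsol_kinkProfile (by omega),
    isViscSupersol_kinkProfile hk1 hk2, tendsto_kinkProfile_atBot, tendsto_kinkProfile_atTop⟩
end

section
/- Let N ≥ 2 and 1 ≤ k ≤ N−1. Let u : ℝ^N → ℝ be lower semicontinuous, one-dimensional (u(x) = v(x_N) for some v : ℝ → ℝ), with 0 ≤ u(x) and |u(x)| < 1 for all x, nondecreasing in the x_N-direction (v is nondecreasing), and a viscosity supersolution of P⁻_k(D²u) + u − u³ = 0 in ℝ^N. Then there exists t₀ ∈ ℝ such that u = 0 on the half-space X₀ = {x ∈ ℝ^N : x_N ≤ t₀}, i.e. v(t) = 0 for all t ≤ t₀. -/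
/-!
Test the supersolution property with affine functions of `x_N`: their Hessian vanishes, so
`P⁻ₖ ≥ 0` there, and wherever `v` minus an affine function has a local minimum we get
`v - v³ ≤ 0`, which for `0 ≤ v < 1` forces `v = 0`. Such a point exists: if `v` is constant
any point will do; otherwise `v(s) < v(t)` for some `s < t`, and since `v ≥ 0` the chord of
`v` over `[x, t]` passes strictly above `v(s)` once `x` is far enough to the left. The lower
semicontinuous function `v - chord` vanishes at both ends, so it attains a negative minimum
inside the interval. Monotonicity spreads `v = 0` to the half-line on the left.
-/

open Filter Set
open scoped Matrix

section Viscosity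

variable {N : ℕ}

lemma truncLap_nonneg {k : ℕ} {X : Matrix (Fin N) (Fin N) ℝ}
    (hX : ∀ w : Fin N → ℝ, 0 ≤ X *ᵥ w ⬝ᵥ w) : 0 ≤ truncLap k X :=
  Real.sInf_nonneg <| by
    rintro s ⟨v, -, rfl⟩
    exact Finset.sum_nonneg fun i _ => hX (v i)

lemma hess_affine_coord (i₀ : Fin N) (a b : ℝ) (x : EuclideanSpace ℝ (Fin N)) :
    hess (fun y : EuclideanSpace ℝ (Fin N) => a + b * y i₀) x = 0 := by
  have hfderiv : fderiv ℝ (fun y : EuclideanSpace ℝ (Fin N) => a + b * y i₀) =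
      fun _ => b • EuclideanSpace.proj (𝕜 := ℝ) i₀ := by
    funext y
    exact (((EuclideanSpace.proj (𝕜 := ℝ) i₀).hasFDerivAt.const_mul b).const_add a).fderiv
  ext i j
  simp [hess, iteratedFDeriv_two_apply, hfderiv]

lemma IsViscSupersol.nonpos_of_isLocalMin_sub_affine {k : ℕ} {f : ℝ → ℝ}
    {u : EuclideanSpace ℝ (Fin N) → ℝ} {v : ℝ → ℝ} (hsup : IsViscSupersol k f u)
    (i₀ : Fin N) (h1d : ∀ x, u x = v (x i₀)) {a b t₀ : ℝ}
    (hmin : IsLocalMin (fun t => v t - (a + b * t)) t₀) : f (v t₀) ≤ 0 := by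
  set x₀ := EuclideanSpace.single i₀ t₀
  have hx₀ : x₀ i₀ = t₀ := by simp [x₀]
  have hmin' : IsLocalMin (fun x => u x - (a + b * x i₀)) x₀ := by
    rw [← hx₀] at hmin
    simp only [h1d]
    exact hmin.comp_continuous (g := fun x => x i₀) (b := x₀)
      (EuclideanSpace.proj (𝕜 := ℝ) i₀).continuous.continuousAt
  have hφ : ContDiff ℝ 2 fun x : EuclideanSpace ℝ (Fin N) => a + b * x i₀ :=
    contDiff_const.add (contDiff_const.mul (EuclideanSpace.proj (𝕜 := ℝ) i₀).contDiff)
  have h := hsup _ hφ x₀ hmin'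
  have htr := truncLap_nonneg (k := k) (X := hess (fun y => a + b * y i₀) x₀)
    (by simp [hess_affine_coord])
  rw [h1d, hx₀] at h
  linarith

end Viscosity

-- `v s` lies strictly below the chord of `v` over `[x, t]`, multiplied out by `t - x > 0`.
lemma exists_lt_chord_of_lt {v : ℝ → ℝ} {m : ℝ} (hv : ∀ t, m ≤ v t) {s t : ℝ}
    (hst : s < t) (hvst : v s < v t) :
    ∃ x < s, v s * (t - x) < v x * (t - s) + v t * (s - x) := by
  have hd : 0 < v t - v s := sub_pos.2 hvst
  have hδ : 0 ≤ (v s - m) * (t - s) / (v t - v s) :=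
    div_nonneg (mul_nonneg (sub_nonneg.2 (hv s)) (sub_pos.2 hst).le) hd.le
  set x := s - ((v s - m) * (t - s) / (v t - v s) + 1)
  have hgap : (v t - v s) * (s - x) = (v s - m) * (t - s) + (v t - v s) := by
    simp only [x]
    field_simp
    ring
  have hvx : m * (t - s) ≤ v x * (t - s) := mul_le_mul_of_nonneg_right (hv x) (sub_pos.2 hst).le
  exact ⟨x, by linarith, by linarith⟩

lemma exists_isLocalMin_sub_affine_of_lt_chord {v : ℝ → ℝ} (hv : LowerSemicontinuous v)
    {a m b : ℝ} (ham : a < m) (hmb : m < b)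
    (hchord : v m * (b - a) < v a * (b - m) + v b * (m - a)) :
    ∃ t₀ α β, IsLocalMin (fun t => v t - (α + β * t)) t₀ := by
  have hab : 0 < b - a := by linarith
  set β := (v b - v a) / (b - a)
  set α := v a - β * a
  set g := fun t => v t - (α + β * t)
  have hga : g a = 0 := by simp only [g, α]; ring
  have hgb : g b = 0 := by
    simp only [g, α, β]
    field_simp
    ring
  have hgm : g m < 0 := by
    have hline : (α + β * m) * (b - a) = v a * (b - m) + v b * (m - a) := by
      simp only [α, β]
      field_simp
      ring
    have : v m * (b - a) < (α + β * m) * (b - a) := hline ▸ hchord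
    exact sub_neg.2 (lt_of_mul_lt_mul_right this hab.le)
  have hg : LowerSemicontinuous g :=
    hv.add (continuous_const.add (continuous_const.mul continuous_id)).neg.lowerSemicontinuous
  obtain ⟨t₀, ht₀, hmin⟩ := hg.lowerSemicontinuousOn (Icc a b) |>.exists_isMinOn
    (nonempty_Icc.2 (ham.trans hmb).le) isCompact_Icc
  have hlt : g t₀ < 0 := (hmin ⟨ham.le, hmb.le⟩).trans_lt hgm
  have hat₀ : a < t₀ := ht₀.1.lt_of_ne fun h => by rw [← h, hga] at hlt; exact hlt.false
  have ht₀b : t₀ < b := ht₀.2.lt_of_ne fun h => by rw [h, hgb] at hlt; exact hlt.false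
  exact ⟨t₀, α, β, hmin.isLocalMin (Icc_mem_nhds hat₀ ht₀b)⟩

lemma Monotone.exists_isLocalMin_sub_affine {v : ℝ → ℝ} (hmono : Monotone v)
    (hlsc : LowerSemicontinuous v) {m : ℝ} (hv : ∀ t, m ≤ v t) :
    ∃ t₀ α β, IsLocalMin (fun t => v t - (α + β * t)) t₀ := by
  by_cases hstrict : ∃ s t, s < t ∧ v s < v t
  · obtain ⟨s, t, hst, hvst⟩ := hstrict
    obtain ⟨x, hxs, hchord⟩ := exists_lt_chord_of_lt hv hst hvst
    exact exists_isLocalMin_sub_affine_of_lt_chord hlsc hxs hst hchord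
  · push Not at hstrict
    have hanti : Antitone v := antitone_iff_forall_lt.2 hstrict
    refine ⟨0, v 0, 0, Eventually.of_forall fun t => ?_⟩
    have hconst : v t = v 0 := by
      rcases le_total t 0 with h | h
      · exact le_antisymm (hmono h) (hanti h)
      · exact le_antisymm (hanti h) (hmono h)
    simp [hconst]

theorem stmt7_general {n : ℕ} (k : ℕ)
    (u : EuclideanSpace ℝ (Fin (n + 2)) → ℝ) (v : ℝ → ℝ)
    (hlsc : LowerSemicontinuous u)
    (h1d : ∀ x, u x = v (x (Fin.last (n + 1))))
    (hnn : ∀ x, 0 ≤ u x) (hbd : ∀ x, |u x| < 1)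
    (hmono : Monotone v)
    (hsup : IsViscSupersol k (fun s => s - s ^ 3) u) :
    ∃ t₀ : ℝ, ∀ t ≤ t₀, v t = 0 := by
  have hv : ∀ t, v t = u (EuclideanSpace.single (Fin.last (n + 1)) t) := fun t => by simp [h1d]
  have hv0 : ∀ t, 0 ≤ v t := fun t => hv t ▸ hnn _
  have hv1 : ∀ t, v t < 1 := fun t => hv t ▸ (abs_lt.1 (hbd _)).2
  have hlscv : LowerSemicontinuous v := by
    rw [show v = u ∘ EuclideanSpace.single (Fin.last (n + 1)) from funext hv]
    exact hlsc.comp (Isometry.of_dist_eq fun a b => by simp).continuous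
  obtain ⟨t₀, α, β, hmin⟩ := hmono.exists_isLocalMin_sub_affine hlscv hv0
  have hcubic : v t₀ - v t₀ ^ 3 ≤ 0 := hsup.nonpos_of_isLocalMin_sub_affine _ h1d hmin
  have hzero : v t₀ = 0 := by
    by_contra hne
    have hpos := lt_of_le_of_ne (hv0 t₀) (Ne.symm hne)
    nlinarith [mul_pos hpos (sub_pos.2 (hv1 t₀))]
  exact ⟨t₀, fun t ht => le_antisymm (hzero ▸ hmono ht) (hv0 t)⟩

/-- a nonnegative LSC one-dimensional viscosity supersolution of
`P⁻ₖ(D²u) + u - u³ = 0` in `ℝ^N` with `|u| < 1` which is nondecreasing in the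
`x_N`-direction must vanish on a half-space `{x_N ≤ t₀}`. -/
theorem stmt7 {n : ℕ} (k : ℕ) (hk1 : 1 ≤ k) (hk2 : k ≤ n + 1)
    (u : EuclideanSpace ℝ (Fin (n + 2)) → ℝ) (v : ℝ → ℝ)
    (hlsc : LowerSemicontinuous u)
    (h1d : ∀ x, u x = v (x (Fin.last (n + 1))))
    (hnn : ∀ x, 0 ≤ u x) (hbd : ∀ x, |u x| < 1)
    (hmono : Monotone v)
    (hsup : IsViscSupersol k (fun s => s - s ^ 3) u) :
    ∃ t₀ : ℝ, ∀ t ≤ t₀, v t = 0 :=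
  stmt7_general k u v hlsc h1d hnn hbd hmono hsup
end

section
/- Let N ≥ 2 and 1 ≤ k ≤ N−1. There is no continuous one-dimensional function u : ℝ^N → ℝ (u(x) = v(x_N) for some v : ℝ → ℝ) with |u(x)| < 1 for all x, such that u is a viscosity solution of P⁻_k(D²u) + u − u³ = 0 in ℝ^N and v is strictly increasing on ℝ. -/
/-!
A test function `q (x j)` has Hessian `q'' • e_j e_jᵀ`. When `q'' ≥ 0` and `k < N`, there are `k`
orthonormal coordinate vectors orthogonal to `e_j`, so `P⁻ₖ` of this Hessian vanishes. For a
one-dimensional `u = v (x j)` the equation thus yields `f (v t) ≥ 0` where `v` is touched from above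
by a convex `q`, and `f (v t) ≤ 0` where it is touched from below by a convex `q`.

Take `f s = s - s³` and `|v| < 1`, so `f` has the sign of `v`. If `v t₁ < 0`, a steep parabola
touches `v` from above at some `t < t₁`, where `f (v t) < 0`. Hence `v ≥ 0`, so `v > 0` by strict
monotonicity. But a bounded increasing function is not convex, so some line touches `v` from below,
at a point where `f (v t) > 0`.
-/

open Matrix Set

theorem truncLap_eq_zero_of_nonneg {N k : ℕ} {X : Matrix (Fin N) (Fin N) ℝ}
    (hX : ∀ w, 0 ≤ X *ᵥ w ⬝ᵥ w) (v : Fin k → Fin N → ℝ)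
    (hv : ∀ i j, v i ⬝ᵥ v j = if i = j then (1 : ℝ) else 0) (hv0 : ∀ i, X *ᵥ v i ⬝ᵥ v i = 0) :
    truncLap k X = 0 := by
  refine IsLeast.csInf_eq ⟨⟨v, hv, by simp [hv0]⟩, ?_⟩
  rintro s ⟨w, -, rfl⟩
  exact Finset.sum_nonneg fun i _ => hX (w i)

theorem smul_vecMulVec_single_mulVec_dotProduct {N : ℕ} (c : ℝ) (j : Fin N) (w : Fin N → ℝ) :
    (c • vecMulVec (Pi.single j 1) (Pi.single j 1)) *ᵥ w ⬝ᵥ w = c * w j ^ 2 := by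
  simp [smul_mulVec, vecMulVec_mulVec, single_dotProduct, smul_dotProduct, sq]

theorem truncLap_smul_vecMulVec_single {m k : ℕ} (hk : k ≤ m) {c : ℝ} (hc : 0 ≤ c)
    (j : Fin (m + 1)) :
    truncLap k (c • vecMulVec (Pi.single j 1) (Pi.single j 1)) = 0 := by
  set ι : Fin k ↪ Fin (m + 1) := (Fin.castLEEmb hk).trans (Fin.succAboveEmb j)
  refine truncLap_eq_zero_of_nonneg (fun w => ?_) (fun i => Pi.single (ι i) 1) (fun i i' => ?_)
    (fun i => ?_)
  · rw [smul_vecMulVec_single_mulVec_dotProduct]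
    positivity
  · simp [Pi.single_apply, ι.injective.eq_iff, eq_comm]
  · rw [smul_vecMulVec_single_mulVec_dotProduct]
    simp [ι]

theorem hess_comp_proj {N : ℕ} {q : ℝ → ℝ} (hq : ContDiff ℝ 2 q) (j : Fin N)
    (x : EuclideanSpace ℝ (Fin N)) :
    hess (fun x => q (x j)) x =
      iteratedDeriv 2 q (x j) • vecMulVec (Pi.single j 1) (Pi.single j 1) := by
  ext i i'
  rw [hess, show (fun x : EuclideanSpace ℝ (Fin N) => q (x j)) = q ∘ EuclideanSpace.proj j from rfl,
    (EuclideanSpace.proj j).iteratedFDeriv_comp_right hq x le_rfl]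
  simp [iteratedFDeriv_apply_eq_iteratedDeriv_mul_prod, Fin.prod_univ_two, vecMulVec,
    Pi.single_apply, eq_comm]

theorem IsViscSubsol.nonneg_of_isLocalMax_sub {m k : ℕ} {f : ℝ → ℝ}
    {u : EuclideanSpace ℝ (Fin (m + 1)) → ℝ} {v : ℝ → ℝ} (hsub : IsViscSubsol k f u) (hk : k ≤ m)
    (j : Fin (m + 1)) (huv : ∀ x, u x = v (x j)) {q : ℝ → ℝ} (hq : ContDiff ℝ 2 q) {t : ℝ}
    (hq2 : 0 ≤ iteratedDeriv 2 q t) (hmax : IsLocalMax (fun s => v s - q s) t) :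
    0 ≤ f (v t) := by
  have hx₀ : (EuclideanSpace.single j t : EuclideanSpace ℝ (Fin (m + 1))) j = t := by simp
  have hloc : IsLocalMax (fun x => u x - q (x j)) (EuclideanSpace.single j t) := by
    simp only [huv]
    rw [← hx₀] at hmax
    exact hmax.comp_continuous (g := fun x : EuclideanSpace ℝ (Fin (m + 1)) => x j)
      (EuclideanSpace.proj j).continuous.continuousAt
  have := hsub (fun x => q (x j)) (hq.comp (EuclideanSpace.proj (𝕜 := ℝ) j).contDiff) _ hloc
  rwa [hess_comp_proj hq, hx₀, truncLap_smul_vecMulVec_single hk hq2, huv, hx₀, zero_add] at this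

theorem IsViscSupersol.nonpos_of_isLocalMin_sub {m k : ℕ} {f : ℝ → ℝ}
    {u : EuclideanSpace ℝ (Fin (m + 1)) → ℝ} {v : ℝ → ℝ} (hsup : IsViscSupersol k f u) (hk : k ≤ m)
    (j : Fin (m + 1)) (huv : ∀ x, u x = v (x j)) {q : ℝ → ℝ} (hq : ContDiff ℝ 2 q) {t : ℝ}
    (hq2 : 0 ≤ iteratedDeriv 2 q t) (hmin : IsLocalMin (fun s => v s - q s) t) :
    f (v t) ≤ 0 := by
  have hx₀ : (EuclideanSpace.single j t : EuclideanSpace ℝ (Fin (m + 1))) j = t := by simp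
  have hloc : IsLocalMin (fun x => u x - q (x j)) (EuclideanSpace.single j t) := by
    simp only [huv]
    rw [← hx₀] at hmin
    exact hmin.comp_continuous (g := fun x : EuclideanSpace ℝ (Fin (m + 1)) => x j)
      (EuclideanSpace.proj j).continuous.continuousAt
  have := hsup (fun x => q (x j)) (hq.comp (EuclideanSpace.proj (𝕜 := ℝ) j).contDiff) _ hloc
  rwa [hess_comp_proj hq, hx₀, truncLap_smul_vecMulVec_single hk hq2, huv, hx₀, zero_add] at this

theorem iteratedDeriv_two_const_mul_sub_sq (a m t : ℝ) :
    iteratedDeriv 2 (fun s => a * (s - m) ^ 2) t = 2 * a := by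
  have h : deriv (fun s => a * (s - m) ^ 2) = fun s => 2 * a * (s - m) := by
    ext s
    simp
    ring
  rw [iteratedDeriv_succ, iteratedDeriv_one, h]
  simp

/-- The parabola rises by `3` on either side of its vertex, more than the oscillation of `v`. -/
theorem exists_lt_isLocalMax_sub_parabola {v : ℝ → ℝ} (hv : Continuous v) (hbd : ∀ t, |v t| < 1)
    (t₁ : ℝ) : ∃ t < t₁, IsLocalMax (fun s => v s - 3 * (s - (t₁ - 1)) ^ 2) t := by
  have hbd' := fun t => abs_lt.mp (hbd t)
  have hends : ∀ z ∈ Icc (t₁ - 2) t₁ \ Ioo (t₁ - 2) t₁,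
      v z - 3 * (z - (t₁ - 1)) ^ 2 < v (t₁ - 1) - 3 * (t₁ - 1 - (t₁ - 1)) ^ 2 := by
    rw [Icc_sdiff_Ioo_same (by linarith)]
    simp only [mem_insert_iff, mem_singleton_iff, forall_eq_or_imp, forall_eq]
    constructor <;> linarith [hbd' (t₁ - 1), hbd' (t₁ - 2), hbd' t₁]
  obtain ⟨t, ht, hmax⟩ := isCompact_Icc.exists_isLocalMax_mem_open Ioo_subset_Icc_self
    (by fun_prop : Continuous fun s => v s - 3 * (s - (t₁ - 1)) ^ 2).continuousOn
    ⟨by linarith, by linarith⟩ hends isOpen_Ioo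
  exact ⟨t, ht.2, hmax⟩

/-- For `d = v 1 - v 0`, the function `v s - d / 2 * s` is larger at `-2 / d` (where it is at
least `1`) and at `1` than at `0`. -/
theorem exists_isLocalMin_sub_linear {v : ℝ → ℝ} (hv : Continuous v) (hv0 : ∀ t, 0 ≤ v t)
    (hv1 : ∀ t, v t < 1) (h01 : v 0 < v 1) : ∃ b t, IsLocalMin (fun s => v s - b * s) t := by
  set d := v 1 - v 0
  have hd0 : 0 < d := sub_pos.mpr h01
  have hd : 0 < 2 / d := div_pos two_pos hd0
  have hends : ∀ z ∈ Icc (-(2 / d)) 1 \ Ioo (-(2 / d)) 1, v 0 - d / 2 * 0 < v z - d / 2 * z := by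
    rw [Icc_sdiff_Ioo_same (by linarith)]
    simp only [mem_insert_iff, mem_singleton_iff, forall_eq_or_imp, forall_eq]
    have : d / 2 * -(2 / d) = -1 := by field_simp
    constructor <;> linarith [hv0 (-(2 / d)), hv1 0]
  obtain ⟨t, -, hmin⟩ := isCompact_Icc.exists_isLocalMin_mem_open Ioo_subset_Icc_self
    (by fun_prop : Continuous fun s => v s - d / 2 * s).continuousOn
    ⟨by linarith, zero_le_one⟩ hends isOpen_Ioo
  exact ⟨d / 2, t, hmin⟩

theorem stmt8_general {n : ℕ} (k : ℕ) (hk2 : k ≤ n + 1) :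
    ¬ ∃ (u : EuclideanSpace ℝ (Fin (n + 2)) → ℝ) (v : ℝ → ℝ),
      Continuous u ∧
      (∀ x, u x = v (x (Fin.last (n + 1)))) ∧
      (∀ x, |u x| < 1) ∧
      IsViscSubsol k (fun s => s - s ^ 3) u ∧
      IsViscSupersol k (fun s => s - s ^ 3) u ∧
      StrictMono v := by
  rintro ⟨u, v, hu, huv, hbd, hsub, hsup, hmono⟩
  have hvu : ∀ t, v t = u (EuclideanSpace.single (Fin.last (n + 1)) t) := by simp [huv]
  have hv : ∀ t, |v t| < 1 := fun t => hvu t ▸ hbd _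
  have hvc : Continuous v := by
    rw [funext hvu]
    exact hu.comp ((PiLp.continuous_toLp 2 _).comp (continuous_single (A := fun _ => ℝ) _))
  by_cases hneg : ∃ t₁, v t₁ < 0
  · obtain ⟨t₁, ht₁⟩ := hneg
    obtain ⟨t, ht, hmax⟩ := exists_lt_isLocalMax_sub_parabola hvc hv t₁
    have := hsub.nonneg_of_isLocalMax_sub hk2 _ huv (by fun_prop)
      (by rw [iteratedDeriv_two_const_mul_sub_sq]; norm_num) hmax
    have hvt : v t < 0 := (hmono ht).trans ht₁
    obtain ⟨hlo, hhi⟩ := abs_lt.mp (hv t)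
    nlinarith [mul_pos (mul_pos (neg_pos.mpr hvt) (sub_pos.mpr hhi)) (neg_lt_iff_pos_add.mp hlo)]
  · push Not at hneg
    obtain ⟨b, t, hmin⟩ :=
      exists_isLocalMin_sub_linear hvc hneg (fun t => (abs_lt.mp (hv t)).2) (hmono zero_lt_one)
    have := hsup.nonpos_of_isLocalMin_sub hk2 _ huv (by fun_prop) (by simp [iteratedDeriv_succ])
      hmin
    have hvt : 0 < v t := (hneg (t - 1)).trans_lt (hmono (by linarith))
    obtain ⟨hlo, hhi⟩ := abs_lt.mp (hv t)
    nlinarith [mul_pos (mul_pos hvt (sub_pos.mpr hhi)) (neg_lt_iff_pos_add.mp hlo)]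

/-- there is no continuous one-dimensional viscosity solution of
`P⁻ₖ(D²u) + u - u³ = 0` in `ℝ^N` with `|u| < 1` whose profile is strictly increasing. -/
theorem stmt8 {n : ℕ} (k : ℕ) (hk1 : 1 ≤ k) (hk2 : k ≤ n + 1) :
    ¬ ∃ (u : EuclideanSpace ℝ (Fin (n + 2)) → ℝ) (v : ℝ → ℝ),
      Continuous u ∧
      (∀ x, u x = v (x (Fin.last (n + 1)))) ∧
      (∀ x, |u x| < 1) ∧
      IsViscSubsol k (fun s => s - s ^ 3) u ∧
      IsViscSupersol k (fun s => s - s ^ 3) u ∧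
      StrictMono v :=
  stmt8_general k hk2
end
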